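/- With the standard monomial sets Σ_{Y,m} and Σ_{Z,m} as in the chain decomposition for X = Y ∪ Z and a diagonal one-parameter subgroup ρ with weights (r_0,...,r_n), the Hilbert–Mumford index satisfies μ([X]_m^*, ρ) = −Σ_{x^α ∈ Σ_{Y,m}} wt_{ρ'}(x^α) − Σ_{x^α ∈ Σ_{Z,m}} wt_{ρ''}(x^α) + (m P(m)/(n+1)) Σ_{i=0}^n r_i + m r_l. -/

import Mathlib

open MvPolynomial Finset
open scoped MonomialOrder Pointwise

/-- The leading exponent (exponent of the leading monomial) of a polynomial
with respect to a monomial order. -/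
noncomputable def leadExp {k : Type*} [Field k] {N : ℕ}
    (mo : MonomialOrder (Fin N)) (f : MvPolynomial (Fin N) k) :
    Fin N →₀ ℕ :=
  mo.toSyn.symm (f.support.sup mo.toSyn)

/-- The ideal of `k[x_0,…,x_{N-1}]` generated by the leading monomials of the elements of
`I ∩ k[x_i : i ∈ s]`, i.e. of the nonzero elements of `I` all of whose variables lie in `s`.
This is the ideal generated by the initial ideal (computed in the smaller polynomial ring
`k[x_i : i ∈ s]` with the restricted monomial order) of the intersection of `I` with that
smaller polynomial ring. -/
noncomputable def restInitialIdeal {k : Type*} [Field k] {N : ℕ} (mo : MonomialOrder (Fin N))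
    (I : Ideal (MvPolynomial (Fin N) k)) (s : Set (Fin N)) :
    Ideal (MvPolynomial (Fin N) k) :=
  Ideal.span { g | ∃ f ∈ I, f ≠ 0 ∧ ↑f.vars ⊆ s ∧ g = monomial (leadExp mo f) (1 : k) }

/-- The initial ideal of `I` with respect to a monomial order: the ideal generated by the
leading monomials of the nonzero elements of `I`. -/
noncomputable def initialIdeal {k : Type*} [Field k] {N : ℕ} (mo : MonomialOrder (Fin N))
    (I : Ideal (MvPolynomial (Fin N) k)) : Ideal (MvPolynomial (Fin N) k) :=
  restInitialIdeal mo I Set.univ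

/-- The coordinate point whose coordinates all vanish except the `c`-th, which equals `1`. -/
def coordPt (k : Type*) [Field k] {N : ℕ} (c : ℕ) : Fin N → k :=
  fun j => if (j : ℕ) = c then 1 else 0

/-- The set of degree-`m` standard monomials (given by their exponent vectors): degree-`m`
monomials in the variables `x_i, i ∈ s`, not lying in the ideal `J`. -/
def stdMonomials {k : Type*} [Field k] {N : ℕ} (J : Ideal (MvPolynomial (Fin N) k))
    (s : Set (Fin N)) (m : ℕ) : Set (Fin N →₀ ℕ) :=
  {α | (∑ i, α i) = m ∧ ↑α.support ⊆ s ∧ monomial α (1 : k) ∉ J}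

/-- The `ρ`-weight of a monomial with exponent vector `α`, for the diagonal one-parameter
subgroup with weights `r`. -/
def wtZ {N : ℕ} (r : Fin N → ℤ) (α : Fin N →₀ ℕ) : ℤ :=
  ∑ i, (α i : ℤ) * r i

/-- The Hilbert–Mumford index of the `m`-th dual Hilbert point of the subscheme of the
coordinate subspace `{x_i : i ∈ s}` cut out by `I ∩ k[x_i : i ∈ s]`, with respect to the
diagonal one-parameter subgroup with weights `r`, computed via the formula
`μ = −Σ_{α standard} wt_ρ(x^α) + (m·P(m)/#s)·Σ_{i ∈ s} r_i`, where `P(m)` is the number of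
degree-`m` standard monomials. -/
noncomputable def HMindex {k : Type*} [Field k] {N : ℕ} (mo : MonomialOrder (Fin N))
    (I : Ideal (MvPolynomial (Fin N) k)) (s : Finset (Fin N)) (m : ℕ) (r : Fin N → ℤ) :
    ℚ :=
  - (∑ᶠ α ∈ stdMonomials (restInitialIdeal mo I ↑s) ↑s m, (wtZ r α : ℚ))
  + (m * (stdMonomials (restInitialIdeal mo I ↑s) ↑s m).ncard : ℚ) / s.card *
      ∑ i ∈ s, (r i : ℚ)

section Lemmas
variable {k : Type*} [Field k] {N : ℕ}


lemma leadExp_mem (mo : MonomialOrder (Fin N)) {f : MvPolynomial (Fin N) k} (hf : f ≠ 0) :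
    leadExp mo f ∈ f.support := by
  obtain ⟨b, hb, hsup⟩ := f.support.exists_mem_eq_sup (support_nonempty.2 hf) mo.toSyn
  rw [leadExp, hsup]
  simpa using hb

lemma le_leadExp (mo : MonomialOrder (Fin N)) {f : MvPolynomial (Fin N) k} {γ : Fin N →₀ ℕ}
    (hγ : γ ∈ f.support) : mo.toSyn γ ≤ mo.toSyn (leadExp mo f) := by
  rw [leadExp, AddEquiv.apply_symm_apply]
  exact Finset.le_sup hγ

lemma leadExp_eq_of (mo : MonomialOrder (Fin N)) {f g : MvPolynomial (Fin N) k}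
    (hsub : g.support ⊆ f.support) (hmem : leadExp mo f ∈ g.support) :
    leadExp mo g = leadExp mo f := by
  apply mo.toSyn.injective
  apply le_antisymm
  · rw [leadExp, AddEquiv.apply_symm_apply]
    exact Finset.sup_le fun γ hγ => le_leadExp mo (hsub hγ)
  · exact le_leadExp mo hmem

lemma leadExp_monomial (mo : MonomialOrder (Fin N)) (β : Fin N →₀ ℕ) :
    leadExp mo (monomial β (1 : k)) = β := by
  classical
  rw [leadExp, support_monomial, if_neg (one_ne_zero)]
  simp


lemma monomial_mem_restInitialIdeal_iff (mo : MonomialOrder (Fin N))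
    (I : Ideal (MvPolynomial (Fin N) k)) (s : Set (Fin N)) (α : Fin N →₀ ℕ) :
    monomial α (1 : k) ∈ restInitialIdeal mo I s ↔
      ∃ f ∈ I, f ≠ 0 ∧ ↑f.vars ⊆ s ∧ leadExp mo f ≤ α := by
  classical
  have hset : { g | ∃ f ∈ I, f ≠ 0 ∧ ↑f.vars ⊆ s ∧ g = monomial (leadExp mo f) (1 : k) }
      = (fun β => monomial β (1 : k)) ''
          {β | ∃ f ∈ I, f ≠ 0 ∧ ↑f.vars ⊆ s ∧ leadExp mo f = β} := by
    ext g
    constructor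
    · rintro ⟨f, hfI, hf0, hv, rfl⟩
      exact ⟨leadExp mo f, ⟨f, hfI, hf0, hv, rfl⟩, rfl⟩
    · rintro ⟨β, ⟨f, hfI, hf0, hv, rfl⟩, rfl⟩
      exact ⟨f, hfI, hf0, hv, rfl⟩
  rw [restInitialIdeal, hset, mem_ideal_span_monomial_image]
  rw [support_monomial, if_neg (one_ne_zero)]
  constructor
  · intro h
    obtain ⟨β, ⟨f, hfI, hf0, hv, rfl⟩, hle⟩ := h α (Finset.mem_singleton_self α)
    exact ⟨f, hfI, hf0, hv, hle⟩
  · rintro ⟨f, hfI, hf0, hv, hle⟩ xi hxi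
    rw [Finset.mem_singleton] at hxi
    subst hxi
    exact ⟨leadExp mo f, ⟨f, hfI, hf0, hv, rfl⟩, hle⟩

lemma monomial_mem_of_var {J : Ideal (MvPolynomial (Fin N) k)} {t : Fin N}
    (ht : (X t : MvPolynomial (Fin N) k) ∈ J) {γ : Fin N →₀ ℕ} (hγ : γ t ≠ 0) (c : k) :
    monomial γ c ∈ J := by
  have hexp : γ - Finsupp.single t 1 + Finsupp.single t 1 = γ := by
    ext i
    rw [Finsupp.add_apply, Finsupp.tsub_apply, Finsupp.single_apply]
    rcases eq_or_ne t i with rfl | h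
    · rw [if_pos rfl]
      omega
    · rw [if_neg h]
      omega
  have h : monomial γ c = monomial (γ - Finsupp.single t 1) c * X t := by
    rw [X, monomial_mul, mul_one, hexp]
  rw [h]
  exact Ideal.mul_mem_left _ _ ht

lemma sum_monomial_mem {J : Ideal (MvPolynomial (Fin N) k)} {S : Finset (Fin N →₀ ℕ)}
    {h : (Fin N →₀ ℕ) → k}
    (H : ∀ γ ∈ S, ∃ t, (X t : MvPolynomial (Fin N) k) ∈ J ∧ γ t ≠ 0) :
    (∑ γ ∈ S, monomial γ (h γ)) ∈ J :=
  Ideal.sum_mem _ fun γ hγ => by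
    obtain ⟨t, htJ, htγ⟩ := H γ hγ
    exact monomial_mem_of_var htJ htγ _

lemma coeff_sum_monomial (S : Finset (Fin N →₀ ℕ)) (h : (Fin N →₀ ℕ) → k) (γ : Fin N →₀ ℕ) :
    coeff γ (∑ δ ∈ S, monomial δ (h δ)) = if γ ∈ S then h γ else 0 := by
  classical
  rw [coeff_sum]
  simp only [coeff_monomial]
  exact Finset.sum_ite_eq' S γ h

lemma degree_eq_sum (d : Fin N →₀ ℕ) : d.degree = ∑ i, d i := by
  rw [Finsupp.degree]
  exact Finset.sum_subset (Finset.subset_univ _)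
    (fun i _ hi => Finsupp.notMem_support_iff.mp hi)

lemma sum_single_eq (c : Fin N) (m : ℕ) : (∑ i, Finsupp.single c m i) = m := by
  rw [← degree_eq_sum, Finsupp.degree_apply]
  classical
  rcases eq_or_ne m 0 with rfl | hm
  · simp
  · rw [Finsupp.support_single_ne_zero _ hm]
    simp


lemma eval_coordPt_homogeneousComponent (c : Fin N) (d : ℕ) (f : MvPolynomial (Fin N) k) :
    eval (coordPt k (c : ℕ)) (homogeneousComponent d f) = coeff (Finsupp.single c d) f := by
  classical
  have hpt : ∀ i : Fin N, coordPt k (c : ℕ) i = if i = c then 1 else 0 := by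
    intro i
    simp [coordPt, Fin.val_eq_val]
  rw [homogeneousComponent_apply, map_sum]
  have key : ∀ γ ∈ f.support.filter (fun γ => γ.degree = d),
      eval (coordPt k (c : ℕ)) (monomial γ (coeff γ f))
        = if γ = Finsupp.single c d then coeff (Finsupp.single c d) f else 0 := by
    intro γ hγ
    rw [Finset.mem_filter] at hγ
    rw [eval_monomial]
    by_cases hsupp : γ.support ⊆ {c}
    · have hγeq : γ = Finsupp.single c (γ c) := Finsupp.support_subset_singleton.mp hsupp
      have hc : γ c = d := by
        have h2 := hγ.2
        conv_lhs at h2 => rw [hγeq]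
        rw [Finsupp.degree_apply] at h2
        rcases eq_or_ne (γ c) 0 with h0 | h0
        · rw [h0] at h2 ⊢
          simpa using h2
        · rw [Finsupp.support_single_ne_zero _ h0] at h2
          simpa using h2
      have hprod : γ.prod (fun i e => coordPt k (c : ℕ) i ^ e) = 1 := by
        apply Finset.prod_eq_one
        intro i hi
        simp only []
        rw [hpt, if_pos (Finset.mem_singleton.mp (hsupp hi)), one_pow]
      rw [hprod, mul_one, if_pos (by rw [hγeq, hc])]
      conv_lhs => rw [hγeq, hc]
    · obtain ⟨i, hiγ, hic⟩ : ∃ i ∈ γ.support, i ≠ c := by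
        by_contra hcon
        push_neg at hcon
        exact hsupp fun i hi => Finset.mem_singleton.mpr (hcon i hi)
      have hzero : γ.prod (fun i e => coordPt k (c : ℕ) i ^ e) = 0 :=
        Finset.prod_eq_zero hiγ
          (by simp only []; rw [hpt, if_neg hic, zero_pow (Finsupp.mem_support_iff.mp hiγ)])
      rw [hzero, mul_zero, if_neg]
      intro heq
      apply hic
      rw [heq] at hiγ
      exact Finset.mem_singleton.mp (Finsupp.support_single_subset hiγ)
  rw [Finset.sum_congr rfl key, Finset.sum_ite_eq' _ (Finsupp.single c d)
    (fun _ => coeff (Finsupp.single c d) f)]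
  split_ifs with hmem
  · rfl
  · by_contra hne
    apply hmem
    rw [Finset.mem_filter]
    refine ⟨mem_support_iff.mpr (fun h0 => hne (h0 ▸ rfl)), ?_⟩
    rcases eq_or_ne d 0 with rfl | hd
    · simp [Finsupp.degree]
    · rw [Finsupp.degree_apply, Finsupp.support_single_ne_zero _ hd]
      simp

lemma coeff_single_vanish {I : Ideal (MvPolynomial (Fin N) k)} {c : Fin N}
    (hhom : ∀ f ∈ I, ∀ d : ℕ, homogeneousComponent d f ∈ I)
    (hp : ∀ f ∈ I, eval (coordPt k (c : ℕ)) f = 0)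
    {f : MvPolynomial (Fin N) k} (hf : f ∈ I) (d : ℕ) :
    coeff (Finsupp.single c d) f = 0 := by
  rw [← eval_coordPt_homogeneousComponent]
  exact hp _ (hhom f hf d)



lemma support_homogeneousComponent_subset (d : ℕ) (f : MvPolynomial (Fin N) k) :
    (homogeneousComponent d f).support ⊆ f.support := by
  intro γ hγ
  rw [mem_support_iff, coeff_homogeneousComponent] at hγ
  rw [mem_support_iff]
  intro h0
  apply hγ
  split_ifs <;> simp [h0]

lemma degree_of_mem_support_homogeneousComponent {d : ℕ} {f : MvPolynomial (Fin N) k}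
    {γ : Fin N →₀ ℕ} (hγ : γ ∈ (homogeneousComponent d f).support) : γ.degree = d := by
  rw [mem_support_iff, coeff_homogeneousComponent] at hγ
  by_contra h
  rw [if_neg h] at hγ
  exact hγ rfl

/-- If every monomial of a homogeneous-closed ideal's element restricted suitably…
Key lemma: the restricted initial ideal of `A` is contained in the full initial ideal
of `A ⊓ B`. -/
lemma rest_le_full (mo : MonomialOrder (Fin N)) {A B : Ideal (MvPolynomial (Fin N) k)}
    {s : Set (Fin N)} {c : Fin N}
    (hAhom : ∀ f ∈ A, ∀ d : ℕ, homogeneousComponent d f ∈ A)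
    (hAp : ∀ f ∈ A, eval (coordPt k (c : ℕ)) f = 0)
    (hB : ∀ t ∈ s, t ≠ c → (X t : MvPolynomial (Fin N) k) ∈ B) :
    restInitialIdeal mo A s ≤ restInitialIdeal mo (A ⊓ B) Set.univ := by
  classical
  rw [restInitialIdeal, Ideal.span_le]
  rintro g ⟨f, hfA, hf0, hvars, rfl⟩
  set β := leadExp mo f with hβ
  set d := β.degree with hd
  set g' := homogeneousComponent d f with hg'
  have hβf : β ∈ f.support := leadExp_mem mo hf0
  have hsub : g'.support ⊆ f.support := support_homogeneousComponent_subset d f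
  have hβg' : β ∈ g'.support := by
    rw [mem_support_iff, coeff_homogeneousComponent, if_pos rfl]
    exact mem_support_iff.mp hβf
  have hsuppvar : ∀ γ ∈ f.support, ↑γ.support ⊆ s := by
    intro γ hγ i hi
    exact hvars ((mem_vars i).mpr ⟨γ, hγ, hi⟩)
  have hg'0 : g' ≠ 0 := fun h => by simp [h] at hβg'
  have hlead : leadExp mo g' = β := leadExp_eq_of mo hsub hβg'
  have hg'A : g' ∈ A := hAhom f hfA d
  have hg'B : g' ∈ B := by
    rw [as_sum g']
    apply sum_monomial_mem
    intro γ hγ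
    have hγs : ↑γ.support ⊆ s := hsuppvar γ (hsub hγ)
    by_cases hc : γ.support ⊆ {c}
    · exfalso
      have hγeq : γ = Finsupp.single c (γ c) := Finsupp.support_subset_singleton.mp hc
      have hdeg : γ.degree = d := degree_of_mem_support_homogeneousComponent hγ
      have hγc : γ c = d := by
        conv_lhs at hdeg => rw [hγeq]
        rcases eq_or_ne (γ c) 0 with h0 | h0
        · rw [h0] at hdeg ⊢
          simpa [Finsupp.degree] using hdeg
        · rw [Finsupp.degree_apply, Finsupp.support_single_ne_zero _ h0] at hdeg
          simpa using hdeg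
      have : coeff γ g' = 0 := by
        rw [hγeq, hγc]
        exact coeff_single_vanish hAhom hAp hg'A d
      exact mem_support_iff.mp hγ this
    · obtain ⟨t, htγ, htc⟩ : ∃ t ∈ γ.support, t ≠ c := by
        by_contra hcon
        push_neg at hcon
        exact hc fun t ht => Finset.mem_singleton.mpr (hcon t ht)
      exact ⟨t, hB t (hγs htγ) htc, Finsupp.mem_support_iff.mp htγ⟩
  apply Ideal.subset_span
  exact ⟨g', ⟨hg'A, hg'B⟩, hg'0, by simp, by rw [hlead]⟩

lemma mem_rest_of_mem_full (mo : MonomialOrder (Fin N))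
    {A B : Ideal (MvPolynomial (Fin N) k)} {s : Set (Fin N)}
    (hAhom : ∀ f ∈ A, ∀ d : ℕ, homogeneousComponent d f ∈ A)
    (hA : ∀ t : Fin N, t ∉ s → (X t : MvPolynomial (Fin N) k) ∈ A)
    {α : Fin N →₀ ℕ} (hα : ↑α.support ⊆ s)
    (h : monomial α (1 : k) ∈ restInitialIdeal mo (A ⊓ B) Set.univ) :
    monomial α (1 : k) ∈ restInitialIdeal mo A s := by
  classical
  rw [monomial_mem_restInitialIdeal_iff] at h
  obtain ⟨f, hfI, hf0, -, hle⟩ := h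
  set β := leadExp mo f with hβ
  have hβα : β.support ⊆ α.support := Finsupp.support_monotone hle
  have hβs : ↑β.support ⊆ s := fun i hi => hα (hβα hi)
  set d := β.degree with hd
  set g := homogeneousComponent d f with hg
  have hβf : β ∈ f.support := leadExp_mem mo hf0
  have hsub : g.support ⊆ f.support := support_homogeneousComponent_subset d f
  have hβg : β ∈ g.support := by
    rw [mem_support_iff, coeff_homogeneousComponent, if_pos rfl]
    exact mem_support_iff.mp hβf
  set S := g.support.filter (fun γ => ↑γ.support ⊆ s) with hS
  set g₁ := ∑ γ ∈ S, monomial γ (coeff γ g) with hg₁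
  have hgA : g ∈ A := hAhom f hfI.1 d
  have hsplit : g₁ + (∑ γ ∈ g.support.filter (fun γ => ¬ ↑γ.support ⊆ s),
      monomial γ (coeff γ g)) = g := by
    rw [hg₁, hS, Finset.sum_filter_add_sum_filter_not]
    exact (as_sum g).symm
  have hg2A : (∑ γ ∈ g.support.filter (fun γ => ¬ ↑γ.support ⊆ s),
      monomial γ (coeff γ g)) ∈ A := by
    apply sum_monomial_mem
    intro γ hγ
    rw [Finset.mem_filter] at hγ
    obtain ⟨t, htγ, hts⟩ : ∃ t ∈ γ.support, t ∉ s := by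
      by_contra hcon
      push_neg at hcon
      exact hγ.2 fun t ht => hcon t ht
    exact ⟨t, hA t hts, Finsupp.mem_support_iff.mp htγ⟩
  have hg1A : g₁ ∈ A := by
    rw [eq_sub_of_add_eq hsplit]
    exact Submodule.sub_mem _ hgA hg2A
  have hco : ∀ γ, coeff γ g₁ = if γ ∈ S then coeff γ g else 0 := fun γ =>
    coeff_sum_monomial S (fun δ => coeff δ g) γ
  have hβS : β ∈ S := Finset.mem_filter.mpr ⟨hβg, hβs⟩
  have hcoβ : coeff β g₁ ≠ 0 := by
    rw [hco, if_pos hβS]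
    exact mem_support_iff.mp hβg
  have hg10 : g₁ ≠ 0 := fun h0 => by simp [h0] at hcoβ
  have hsupp1 : g₁.support ⊆ f.support := by
    intro γ hγ
    rw [mem_support_iff, hco] at hγ
    split_ifs at hγ with hγS
    · exact hsub (Finset.mem_filter.mp hγS).1
    · exact absurd rfl hγ
  have hβg1 : β ∈ g₁.support := mem_support_iff.mpr hcoβ
  have hlead : leadExp mo g₁ = β := leadExp_eq_of mo hsupp1 hβg1
  have hvars1 : ↑g₁.vars ⊆ s := by
    intro i hi
    obtain ⟨γ, hγ, hiγ⟩ := (mem_vars i).mp hi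
    rw [mem_support_iff, hco] at hγ
    split_ifs at hγ with hγS
    · exact (Finset.mem_filter.mp hγS).2 hiγ
    · exact absurd rfl hγ
  have hβmem : monomial β (1 : k) ∈ restInitialIdeal mo A s := by
    apply Ideal.subset_span
    exact ⟨g₁, hg1A, hg10, hvars1, by rw [hlead]⟩
  have heq : monomial α (1 : k) = monomial (α - β) 1 * monomial β 1 := by
    rw [monomial_mul, one_mul, tsub_add_cancel_of_le hle]
  rw [heq]
  exact Ideal.mul_mem_left _ _ hβmem

lemma single_not_mem_rest (mo : MonomialOrder (Fin N)) {I : Ideal (MvPolynomial (Fin N) k)}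
    {c : Fin N}
    (hhom : ∀ f ∈ I, ∀ d : ℕ, homogeneousComponent d f ∈ I)
    (hp : ∀ f ∈ I, eval (coordPt k (c : ℕ)) f = 0)
    (s : Set (Fin N)) (m : ℕ) :
    monomial (Finsupp.single c m) (1 : k) ∉ restInitialIdeal mo I s := by
  rw [monomial_mem_restInitialIdeal_iff]
  rintro ⟨f, hfI, hf0, -, hle⟩
  have hsupp : (leadExp mo f).support ⊆ {c} := fun i hi =>
    Finsupp.support_single_subset (Finsupp.support_monotone hle hi)
  have heq : leadExp mo f = Finsupp.single c (leadExp mo f c) :=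
    Finsupp.support_subset_singleton.mp hsupp
  have hne : coeff (leadExp mo f) f ≠ 0 := mem_support_iff.mp (leadExp_mem mo hf0)
  apply hne
  rw [heq]
  exact coeff_single_vanish hhom hp hfI _


lemma stdMonomials_finite (J : Ideal (MvPolynomial (Fin N) k)) (s : Set (Fin N)) (m : ℕ) :
    (stdMonomials J s m).Finite := by
  classical
  apply Set.Finite.subset (Set.finite_Iic (Finsupp.equivFunOnFinite.symm (fun _ : Fin N => m)))
  intro α hα
  rw [Set.mem_Iic, Finsupp.le_def]
  intro i
  have h : α i ≤ ∑ j, α j := Finset.single_le_sum (fun j _ => Nat.zero_le _) (Finset.mem_univ i)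
  simpa [Finsupp.equivFunOnFinite] using h.trans_eq hα.1

lemma wtZ_single (r : Fin N → ℤ) (c : Fin N) (m : ℕ) :
    wtZ r (Finsupp.single c m) = m * r c := by
  classical
  rw [wtZ, Finset.sum_eq_single c]
  · simp
  · intro i _ hic
    simp [Finsupp.single_apply, Ne.symm hic]
  · intro h
    exact absurd (Finset.mem_univ c) h

end Lemmas

/-- for `X = Y ∪ Z` in the two-block setting and a diagonal one-parameter
subgroup with weights `r`, the Hilbert–Mumford index of the `m`-th dual Hilbert point is
`μ([X]_m^*, ρ) = −Σ_{x^α ∈ Σ_{Y,m}} wt_{ρ'}(x^α) − Σ_{x^α ∈ Σ_{Z,m}} wt_{ρ''}(x^α)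
 + (mP(m)/(n+1))Σ_{i=0}^n r_i + m·r_l`. -/
theorem hilbert_mumford_standard_monomial_formula {k : Type*} [Field k]
    (n l : ℕ) (hl : l ≤ n)
    (IY IZ : Ideal (MvPolynomial (Fin (n + 1)) k))
    (hIYhom : ∀ f ∈ IY, ∀ d : ℕ, homogeneousComponent d f ∈ IY)
    (hIZhom : ∀ f ∈ IZ, ∀ d : ℕ, homogeneousComponent d f ∈ IZ)
    (hYsub : ∀ j : Fin (n + 1), (j : ℕ) < l → (X j : MvPolynomial (Fin (n + 1)) k) ∈ IY)
    (hZsub : ∀ j : Fin (n + 1), l < (j : ℕ) → (X j : MvPolynomial (Fin (n + 1)) k) ∈ IZ)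
    (hYp : ∀ f ∈ IY, eval (coordPt k l) f = 0)
    (hZp : ∀ f ∈ IZ, eval (coordPt k l) f = 0)
    (r : Fin (n + 1) → ℤ) (mo : MonomialOrder (Fin (n + 1)))
    (hmo : ∀ α β : Fin (n + 1) →₀ ℕ, (∑ i, α i) = (∑ i, β i) →
      wtZ r α < wtZ r β → (α ≺[mo] β))
    (m : ℕ) :
    HMindex mo (IY ⊓ IZ) Finset.univ m r =
      - (∑ᶠ α ∈ stdMonomials
          (restInitialIdeal mo IY {j : Fin (n + 1) | l ≤ (j : ℕ)})
          {j : Fin (n + 1) | l ≤ (j : ℕ)} m, (wtZ r α : ℚ))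
      - (∑ᶠ α ∈ stdMonomials
          (restInitialIdeal mo IZ {j : Fin (n + 1) | (j : ℕ) ≤ l})
          {j : Fin (n + 1) | (j : ℕ) ≤ l} m, (wtZ r α : ℚ))
      + (m * (stdMonomials (initialIdeal mo (IY ⊓ IZ)) Set.univ m).ncard : ℚ) /
          ((n : ℚ) + 1) * (∑ i : Fin (n + 1), (r i : ℚ))
      + (m : ℚ) * (r ⟨l, by omega⟩ : ℚ) := by
  classical
  have hl1 : l < n + 1 := by omega
  set c : Fin (n + 1) := ⟨l, hl1⟩ with hcdef
  have hcv : (c : ℕ) = l := rfl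
  set sY : Set (Fin (n + 1)) := {j : Fin (n + 1) | l ≤ (j : ℕ)} with hsYdef
  set sZ : Set (Fin (n + 1)) := {j : Fin (n + 1) | (j : ℕ) ≤ l} with hsZdef
  have hYp' : ∀ f ∈ IY, eval (coordPt k (c : ℕ)) f = 0 := hYp
  have hZp' : ∀ f ∈ IZ, eval (coordPt k (c : ℕ)) f = 0 := hZp
  have hYX : restInitialIdeal mo IY sY ≤ restInitialIdeal mo (IY ⊓ IZ) Set.univ := by
    apply rest_le_full mo hIYhom hYp'
    intro t hts htc
    apply hZsub
    have hne : (t : ℕ) ≠ l := fun h => htc (Fin.ext (by rw [h, hcv]))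
    simp only [hsYdef, Set.mem_setOf_eq] at hts
    omega
  have hZX : restInitialIdeal mo IZ sZ ≤ restInitialIdeal mo (IY ⊓ IZ) Set.univ := by
    have h : restInitialIdeal mo IZ sZ ≤ restInitialIdeal mo (IZ ⊓ IY) Set.univ := by
      apply rest_le_full mo hIZhom hZp'
      intro t hts htc
      apply hYsub
      have hne : (t : ℕ) ≠ l := fun h => htc (Fin.ext (by rw [h, hcv]))
      simp only [hsZdef, Set.mem_setOf_eq] at hts
      omega
    rwa [inf_comm IZ IY] at h
  have hunion : stdMonomials (restInitialIdeal mo (IY ⊓ IZ) Set.univ) Set.univ m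
      = stdMonomials (restInitialIdeal mo IY sY) sY m
        ∪ stdMonomials (restInitialIdeal mo IZ sZ) sZ m := by
    ext α
    simp only [stdMonomials, Set.mem_setOf_eq, Set.mem_union]
    constructor
    · rintro ⟨hdeg, -, hnot⟩
      have hsplit : (↑α.support ⊆ sY) ∨ (↑α.support ⊆ sZ) := by
        by_contra hcon
        push_neg at hcon
        obtain ⟨hY, hZ⟩ := hcon
        obtain ⟨i, hi, his⟩ := Set.not_subset.mp hY
        obtain ⟨j, hj, hjs⟩ := Set.not_subset.mp hZ
        simp only [hsYdef, Set.mem_setOf_eq, not_le] at his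
        simp only [hsZdef, Set.mem_setOf_eq, not_le] at hjs
        have hi' : α i ≠ 0 := Finsupp.mem_support_iff.mp hi
        have hj' : α j ≠ 0 := Finsupp.mem_support_iff.mp hj
        have hij : i ≠ j := by
          intro h
          rw [h] at his
          omega
        apply hnot
        rw [monomial_mem_restInitialIdeal_iff]
        refine ⟨monomial (Finsupp.single i 1 + Finsupp.single j 1) (1 : k), ⟨?_, ?_⟩, ?_, ?_, ?_⟩
        · apply monomial_mem_of_var (hYsub i his)
          rw [Finsupp.add_apply, Finsupp.single_eq_same, Finsupp.single_eq_of_ne' (Ne.symm hij)]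
          omega
        · apply monomial_mem_of_var (hZsub j hjs)
          rw [Finsupp.add_apply, Finsupp.single_eq_same, Finsupp.single_eq_of_ne' hij]
          omega
        · simp [monomial_eq_zero]
        · exact Set.subset_univ _
        · rw [leadExp_monomial, Finsupp.le_def]
          intro t
          rw [Finsupp.add_apply, Finsupp.single_apply, Finsupp.single_apply]
          by_cases h1 : i = t <;> by_cases h2 : j = t
          · exact absurd (h1.trans h2.symm) hij
          · rw [if_pos h1, if_neg h2]
            subst h1
            omega
          · rw [if_neg h1, if_pos h2]
            subst h2
            omega
          · rw [if_neg h1, if_neg h2]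
            omega
      rcases hsplit with hs | hs
      · exact Or.inl ⟨hdeg, hs, fun hmem => hnot (hYX hmem)⟩
      · exact Or.inr ⟨hdeg, hs, fun hmem => hnot (hZX hmem)⟩
    · rintro (⟨hdeg, hsup, hnot⟩ | ⟨hdeg, hsup, hnot⟩)
      · refine ⟨hdeg, Set.subset_univ _, fun hmem => hnot ?_⟩
        apply mem_rest_of_mem_full mo hIYhom ?_ hsup hmem
        intro t hts
        apply hYsub
        simp only [hsYdef, Set.mem_setOf_eq, not_le] at hts
        exact hts
      · refine ⟨hdeg, Set.subset_univ _, fun hmem => hnot ?_⟩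
        have hmem' : monomial α (1 : k) ∈ restInitialIdeal mo (IZ ⊓ IY) Set.univ := by
          rwa [inf_comm IZ IY]
        apply mem_rest_of_mem_full mo hIZhom ?_ hsup hmem'
        intro t hts
        apply hZsub
        simp only [hsZdef, Set.mem_setOf_eq, not_le] at hts
        exact hts
  have hsingleY : Finsupp.single c m ∈ stdMonomials (restInitialIdeal mo IY sY) sY m := by
    refine ⟨sum_single_eq c m, ?_, single_not_mem_rest mo hIYhom hYp' sY m⟩
    intro i hi
    have hic : i = c :=
      Finset.mem_singleton.mp (Finsupp.support_single_subset (Finset.mem_coe.mp hi))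
    rw [hic]
    show l ≤ (c : ℕ)
    rw [hcv]
  have hsingleZ : Finsupp.single c m ∈ stdMonomials (restInitialIdeal mo IZ sZ) sZ m := by
    refine ⟨sum_single_eq c m, ?_, single_not_mem_rest mo hIZhom hZp' sZ m⟩
    intro i hi
    have hic : i = c :=
      Finset.mem_singleton.mp (Finsupp.support_single_subset (Finset.mem_coe.mp hi))
    rw [hic]
    show (c : ℕ) ≤ l
    rw [hcv]
  have hinter : stdMonomials (restInitialIdeal mo IY sY) sY m
      ∩ stdMonomials (restInitialIdeal mo IZ sZ) sZ m = {Finsupp.single c m} := by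
    ext α
    constructor
    · rintro ⟨⟨hdeg, hsY1, -⟩, ⟨-, hsZ1, -⟩⟩
      have hsupp : α.support ⊆ {c} := by
        intro i hi
        have h1 := hsY1 (Finset.mem_coe.mpr hi)
        have h2 := hsZ1 (Finset.mem_coe.mpr hi)
        simp only [hsYdef, Set.mem_setOf_eq] at h1
        simp only [hsZdef, Set.mem_setOf_eq] at h2
        rw [Finset.mem_singleton]
        apply Fin.ext
        rw [hcv]
        omega
      have hα : α = Finsupp.single c (α c) := Finsupp.support_subset_singleton.mp hsupp
      rw [hα, sum_single_eq] at hdeg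
      rw [Set.mem_singleton_iff, hα, hdeg]
    · intro h
      rw [Set.mem_singleton_iff] at h
      subst h
      exact ⟨hsingleY, hsingleZ⟩
  have hfY := stdMonomials_finite (restInitialIdeal mo IY sY) sY m
  have hfZ := stdMonomials_finite (restInitialIdeal mo IZ sZ) sZ m
  have hkey := finsum_mem_union_inter (f := fun α => ((wtZ r α : ℤ) : ℚ)) hfY hfZ
  rw [hinter, finsum_mem_singleton] at hkey
  have hWc : ((wtZ r (Finsupp.single c m) : ℤ) : ℚ) = (m : ℚ) * (r c : ℚ) := by
    rw [wtZ_single]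
    push_cast
    ring
  rw [hWc] at hkey
  rw [HMindex, Finset.coe_univ, initialIdeal, hunion]
  simp only [Finset.card_univ, Fintype.card_fin]
  push_cast
  linarith [hkey]
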